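/- arXiv:0706.2026 — 5 statements merged into one kernel-verified Lean document; each statement's English description precedes it below -/
import Mathlib

section
/- Let (X, Y) be an irreducible Weyl pair on a finite-dimensional complex vector space V, where q^2 is a primitive N-th root of unity. Then there exist nonzero complex numbers x and y such that X^N = x·Id_V and Y^N = y·Id_V, and the dimension of V over ℂ is exactly N. -/
open TensorProduct

noncomputable section

/-- ℂ^N: functions from ℤ/Nℤ to ℂ. -/
abbrev CN (N : ℕ) := ZMod N → ℂ

/-- The operator A with A e_k = q^{2k} e_k. -/
def opA (q : ℂ) (N : ℕ) : Module.End ℂ (CN N) where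
  toFun f := fun k => q ^ (2 * k.val) * f k
  map_add' f g := by funext k; simp [mul_add]
  map_smul' c f := by funext k; simp [smul_eq_mul]; ring

/-- The operator B with B e_k = e_{k+1}. -/
def opB (N : ℕ) : Module.End ℂ (CN N) where
  toFun f := fun k => f (k - 1)
  map_add' f g := by funext k; simp
  map_smul' c f := by funext k; simp

/-- The operator C with C e_k = q^{1-2k} e_{k-1}, i.e. (C f)(k) = q^{-1-2k} f(k+1). -/
def opC (q : ℂ) (N : ℕ) : Module.End ℂ (CN N) where
  toFun f := fun k => q ^ (-1 - 2 * (k.val : ℤ)) * f (k + 1)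
  map_add' f g := by funext k; simp [mul_add]
  map_smul' c f := by funext k; simp [smul_eq_mul]; ring

/-- A Weyl pair: invertible endomorphisms with X Y = q² Y X. -/
def IsWeylPair (q : ℂ) {V : Type*} [AddCommMonoid V] [Module ℂ V]
    (X Y : Module.End ℂ V) : Prop :=
  IsUnit X ∧ IsUnit Y ∧ X * Y = q ^ 2 • (Y * X)

/-- A subspace invariant under both X and Y. -/
def WeylInvariant {V : Type*} [AddCommMonoid V] [Module ℂ V]
    (X Y : Module.End ℂ V) (W : Submodule ℂ V) : Prop :=
  (∀ v ∈ W, X v ∈ W) ∧ (∀ v ∈ W, Y v ∈ W)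

/-- An irreducible Weyl pair. -/
def IsIrreducibleWeylPair (q : ℂ) {V : Type*} [AddCommMonoid V] [Module ℂ V]
    (X Y : Module.End ℂ V) : Prop :=
  IsWeylPair q X Y ∧ Nontrivial V ∧
    ∀ W : Submodule ℂ V, WeylInvariant X Y W → W = ⊥ ∨ W = ⊤

/-!
Since `(q²)ᴺ = 1`, the relation `X Y = q² Y X` makes `Xᴺ` and `Yᴺ` commute with both `X` and `Y`,
so by Schur's lemma they are scalars, nonzero because `X`, `Y` are invertible. If `X v = μ v`
with `v ≠ 0`, then `Yᵏ v` is an eigenvector of `X` for the eigenvalue `q²ᵏ μ`. For `k < N` these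
eigenvalues are distinct, so the `Yᵏ v` are linearly independent; and as `Yᴺ` is a scalar their
span is invariant, hence all of `V`. Thus they form a basis and `dim V = N`.
-/

open Module Submodule Set

section CommutationRelation

variable {R A : Type*} [CommSemiring R] [Semiring A] [Algebra R A] {a b : A} {c : R}

theorem pow_mul_eq_smul_mul_pow_of_mul_eq_smul (h : a * b = c • (b * a)) (n : ℕ) :
    a ^ n * b = c ^ n • (b * a ^ n) := by
  induction n with
  | zero => simp
  | succ n ih =>
    rw [pow_succ, mul_assoc, h, mul_smul_comm, ← mul_assoc, ih, smul_mul_assoc, smul_smul,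
      mul_assoc, ← pow_succ, ← pow_succ']

theorem mul_pow_eq_smul_pow_mul_of_mul_eq_smul (h : a * b = c • (b * a)) (n : ℕ) :
    a * b ^ n = c ^ n • (b ^ n * a) := by
  induction n with
  | zero => simp
  | succ n ih =>
    rw [pow_succ', ← mul_assoc, h, smul_mul_assoc, mul_assoc, ih, mul_smul_comm, smul_smul,
      ← mul_assoc, ← pow_succ', ← pow_succ']

theorem commute_pow_left_of_mul_eq_smul (h : a * b = c • (b * a)) {n : ℕ} (hc : c ^ n = 1) :
    Commute (a ^ n) b := by
  rw [Commute, SemiconjBy, pow_mul_eq_smul_mul_pow_of_mul_eq_smul h, hc, one_smul]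

theorem commute_pow_right_of_mul_eq_smul (h : a * b = c • (b * a)) {n : ℕ} (hc : c ^ n = 1) :
    Commute a (b ^ n) := by
  rw [Commute, SemiconjBy, mul_pow_eq_smul_pow_mul_of_mul_eq_smul h, hc, one_smul]

end CommutationRelation

theorem ne_zero_of_isUnit_smul_one {R A : Type*} [Semiring R] [Semiring A] [Nontrivial A]
    [Module R A] {c : R} (h : IsUnit (c • (1 : A))) : c ≠ 0 := by
  rintro rfl
  simp at h

namespace Module.End

variable {R M : Type*} [CommRing R] [AddCommGroup M] [Module R M]

theorem HasEigenvector.ne_zero_of_isUnit {f : End R M} {μ : R} {v : M} (hf : IsUnit f)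
    (hv : f.HasEigenvector μ v) : μ ≠ 0 := by
  rintro rfl
  refine hv.2 (((isUnit_iff f).mp hf).1 ?_)
  rw [hv.apply_eq_smul, zero_smul, map_zero]

theorem HasEigenvector.pow_apply_of_mul_eq_smul {f g : End R M} {c μ : R} {v : M}
    (hfg : f * g = c • (g * f)) (hg : IsUnit g) (hv : f.HasEigenvector μ v) (k : ℕ) :
    f.HasEigenvector (c ^ k * μ) ((g ^ k) v) := by
  refine ⟨mem_eigenspace_iff.mpr ?_, fun h0 => hv.2 (((isUnit_iff _).mp (hg.pow k)).1 ?_)⟩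
  · have := congr($(mul_pow_eq_smul_pow_mul_of_mul_eq_smul hfg k) v)
    simp only [mul_apply, LinearMap.smul_apply] at this
    rw [this, hv.apply_eq_smul, map_smul, smul_smul]
  · rwa [map_zero]

theorem pow_apply_mem_span_range_fin {f : End R M} {N : ℕ} (hN : 0 < N) {c : R}
    (hf : f ^ N = c • 1) (v : M) (m : ℕ) :
    (f ^ m) v ∈ span R (range fun k : Fin N => (f ^ (k : ℕ)) v) := by
  have hpow : f ^ m = c ^ (m / N) • f ^ (m % N) := by
    conv_lhs => rw [← Nat.div_add_mod m N]
    rw [pow_add, pow_mul, hf, smul_pow, one_pow, smul_one_mul]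
  rw [hpow, LinearMap.smul_apply]
  exact smul_mem _ _ (subset_span ⟨⟨m % N, Nat.mod_lt m hN⟩, rfl⟩)

end Module.End

section WeylPair

variable {V : Type*} [AddCommGroup V] [Module ℂ V]

theorem exists_eq_smul_one_of_commute [FiniteDimensional ℂ V] [Nontrivial V]
    {X Y T : End ℂ V} (hirr : ∀ W : Submodule ℂ V, WeylInvariant X Y W → W = ⊥ ∨ W = ⊤)
    (hTX : Commute T X) (hTY : Commute T Y) : ∃ c : ℂ, T = c • 1 := by
  obtain ⟨μ, hμ⟩ := End.exists_eigenvalue T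
  have hinv : WeylInvariant X Y (T.eigenspace μ) :=
    ⟨End.mapsTo_genEigenspace_of_comm hTX μ 1, End.mapsTo_genEigenspace_of_comm hTY μ 1⟩
  refine ⟨μ, LinearMap.ext fun v => ?_⟩
  have hv : v ∈ T.eigenspace μ := ((hirr _ hinv).resolve_left hμ).symm ▸ mem_top
  simpa using End.mem_eigenspace_iff.mp hv

theorem weylInvariant_span_range_pow_apply {c μ y : ℂ} {X Y : End ℂ V} {v : V} {N : ℕ}
    (hXY : X * Y = c • (Y * X)) (hY : IsUnit Y) (hv : X.HasEigenvector μ v) (hN : 0 < N)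
    (hYN : Y ^ N = y • 1) :
    WeylInvariant X Y (span ℂ (range fun k : Fin N => (Y ^ (k : ℕ)) v)) := by
  set W := span ℂ (range fun k : Fin N => (Y ^ (k : ℕ)) v)
  have hgen : ∀ T : End ℂ V, (∀ k : Fin N, T ((Y ^ (k : ℕ)) v) ∈ W) → ∀ u ∈ W, T u ∈ W :=
    fun T hT u hu => span_le (p := W.comap T) |>.mpr (range_subset_iff.mpr hT) hu
  refine ⟨hgen X fun k => ?_, hgen Y fun k => ?_⟩
  · rw [(hv.pow_apply_of_mul_eq_smul hXY hY k).apply_eq_smul]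
    exact smul_mem _ _ (subset_span (mem_range_self k))
  · rw [← End.mul_apply, ← pow_succ']
    exact End.pow_apply_mem_span_range_fin hN hYN v _

theorem finrank_eq_of_isIrreducibleWeylPair [FiniteDimensional ℂ V] {N : ℕ} (hN : 1 ≤ N)
    {q : ℂ} (hq : IsPrimitiveRoot (q ^ 2) N) {X Y : End ℂ V} (h : IsIrreducibleWeylPair q X Y)
    {y : ℂ} (hYN : Y ^ N = y • 1) : finrank ℂ V = N := by
  obtain ⟨⟨hX, hY, hXY⟩, _, hirr⟩ := h
  obtain ⟨μ, hμ⟩ := End.exists_eigenvalue X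
  obtain ⟨v, hv⟩ := hμ.exists_hasEigenvector
  set w : Fin N → V := fun k => (Y ^ (k : ℕ)) v
  have hli : LinearIndependent ℂ w := by
    refine X.eigenvectors_linearIndependent' (fun k : Fin N => (q ^ 2) ^ (k : ℕ) * μ) ?_ w
      (hv.pow_apply_of_mul_eq_smul hXY hY ·)
    intro i j hij
    exact Fin.ext (hq.pow_inj i.isLt j.isLt (mul_right_cancel₀ (hv.ne_zero_of_isUnit hX) hij))
  have hspan : span ℂ (range w) = ⊤ := by
    refine (hirr _ (weylInvariant_span_range_pow_apply hXY hY hv hN hYN)).resolve_left ?_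
    intro hbot
    exact hv.2 (span_eq_bot.mp hbot v ⟨⟨0, hN⟩, by simp⟩)
  refine le_antisymm ?_ ?_
  · calc finrank ℂ V = (range w).finrank ℂ := by rw [Set.finrank, hspan, finrank_top]
      _ ≤ N := (finrank_range_le_card w).trans_eq (Fintype.card_fin N)
  · simpa using hli.fintype_card_le_finrank

end WeylPair

/-- an irreducible Weyl pair has scalar N-th powers and dimension N. -/
theorem stmt1 (N : ℕ) (hN : 1 ≤ N) (q : ℂ) (hq : IsPrimitiveRoot (q ^ 2) N)
    (V : Type*) [AddCommGroup V] [Module ℂ V] [FiniteDimensional ℂ V]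
    (X Y : Module.End ℂ V) (h : IsIrreducibleWeylPair q X Y) :
    ∃ x y : ℂ, x ≠ 0 ∧ y ≠ 0 ∧
      X ^ N = x • (1 : Module.End ℂ V) ∧ Y ^ N = y • (1 : Module.End ℂ V) ∧
      Module.finrank ℂ V = N := by
  have ⟨⟨hX, hY, hXY⟩, _, hirr⟩ := h
  have hqN : (q ^ 2) ^ N = 1 := hq.pow_eq_one
  obtain ⟨x, hx⟩ := exists_eq_smul_one_of_commute hirr
    ((Commute.refl X).pow_left N) (commute_pow_left_of_mul_eq_smul hXY hqN)
  obtain ⟨y, hy⟩ := exists_eq_smul_one_of_commute hirr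
    (commute_pow_right_of_mul_eq_smul hXY hqN).symm ((Commute.refl Y).pow_left N)
  refine ⟨x, y, ne_zero_of_isUnit_smul_one (hx ▸ hX.pow N),
    ne_zero_of_isUnit_smul_one (hy ▸ hY.pow N), hx, hy, ?_⟩
  exact finrank_eq_of_isIrreducibleWeylPair hN hq h hy

end
end

section
/- Let (X, Y) be an irreducible Weyl pair on a finite-dimensional complex vector space V, with X^N = x·Id_V and Y^N = y·Id_V for nonzero complex numbers x, y. Then for every pair of complex numbers u, v with u^N = x and v^N = y, there exists a linear isomorphism φ : V → ℂ^N such that φ∘X = (uA)∘φ and φ∘Y = (vB)∘φ. -/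
open TensorProduct

noncomputable section

/-!
Replacing `(X, Y)` by `(u⁻¹ • X, v⁻¹ • Y)` reduces to the case `X ^ N = Y ^ N = 1`. There every
eigenvalue of `X` is a power of `q²`, and since `Y` multiplies eigenvalues of `X` by `q²`, a
suitable `Y ^ j` moves an eigenvector to an eigenvector `w` with eigenvalue `1`. The vectors
`Y ^ k w`, `k : ZMod N` (well defined as `Y ^ N = 1`), are eigenvectors for the distinct
eigenvalues `q ^ (2k)`, hence independent; their span is invariant, hence everything by
irreducibility. In this basis `X` and `Y` are exactly `A` and `B`.
-/

theorem mul_pow_eq_smul_pow_mul {R A : Type*} [CommSemiring R] [Semiring A] [Algebra R A]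
    {X Y : A} {c : R} (hXY : X * Y = c • (Y * X)) (m : ℕ) :
    X * Y ^ m = c ^ m • (Y ^ m * X) := by
  induction m with
  | zero => simp
  | succ m ih =>
    rw [pow_succ, ← mul_assoc, ih, smul_mul_assoc, mul_assoc, hXY, mul_smul_comm, smul_smul,
      ← pow_succ, ← mul_assoc]

theorem inv_smul_pow_eq_one {K A : Type*} [Field K] [Semiring A] [Algebra K A] {N : ℕ}
    {X : A} {x u : K} (hX : X ^ N = x • 1) (hu : u ^ N = x) (hx : x ≠ 0) :
    (u⁻¹ • X) ^ N = 1 := by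
  rw [smul_pow, hX, smul_smul, inv_pow, hu, inv_mul_cancel₀ hx, one_smul]

theorem pow_zmod_val_add_one {M : Type*} [Monoid M] {N : ℕ} [NeZero N] {a : M}
    (ha : a ^ N = 1) (k : ZMod N) : a ^ (k + 1).val = a ^ (k.val + 1) := by
  rw [ZMod.val_add, ZMod.val_one_eq_one_mod, Nat.add_mod_mod, ← pow_eq_pow_mod _ ha]

namespace Module.End

variable {K V : Type*} [Field K] [AddCommGroup V] [Module K V] {X Y : End K V}

theorem HasEigenvector.pow_apply_of_mul_eq_smul_s2 {c μ : K} {w : V} (hw : X.HasEigenvector μ w)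
    (hXY : X * Y = c • (Y * X)) (hY : Function.Injective Y) (m : ℕ) :
    X.HasEigenvector (c ^ m * μ) ((Y ^ m) w) := by
  refine ⟨mem_eigenspace_iff.mpr ?_, fun h0 => hw.2 (hY.iterate m ?_)⟩
  · calc X ((Y ^ m) w) = (X * Y ^ m) w := rfl
      _ = (c ^ m * μ) • (Y ^ m) w := by
        rw [mul_pow_eq_smul_pow_mul hXY, LinearMap.smul_apply, mul_apply, hw.apply_eq_smul,
          map_smul, smul_smul]
  · rwa [← coe_pow, map_zero]

theorem HasEigenvector.pow_eq_one {μ : K} {w : V} {N : ℕ} (hw : X.HasEigenvector μ w)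
    (hX : X ^ N = 1) : μ ^ N = 1 := by
  apply smul_left_injective K hw.2
  simpa [hX] using (hw.pow_apply N).symm

theorem exists_hasEigenvector_one_of_mul_eq_smul [IsAlgClosed K] [FiniteDimensional K V]
    [Nontrivial V] {N : ℕ} [NeZero N] {ζ : K} (hζ : IsPrimitiveRoot ζ N)
    (hXY : X * Y = ζ • (Y * X)) (hX : X ^ N = 1) (hY : Function.Injective Y) :
    ∃ w, X.HasEigenvector 1 w := by
  obtain ⟨μ, hμ⟩ := X.exists_eigenvalue
  obtain ⟨w, hw⟩ := hμ.exists_hasEigenvector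
  obtain ⟨i, hiN, rfl⟩ := hζ.eq_pow_of_pow_eq_one (hw.pow_eq_one hX)
  refine ⟨(Y ^ (N - i)) w, ?_⟩
  convert hw.pow_apply_of_mul_eq_smul_s2 hXY hY (N - i)
  rw [← pow_add, Nat.sub_add_cancel hiN.le, hζ.pow_eq_one]

end Module.End

section StandardPair

variable {V : Type*} [AddCommGroup V] [Module ℂ V] {N : ℕ} {q : ℂ} {X Y : Module.End ℂ V}

theorem opA_single (i : ZMod N) (c : ℂ) :
    opA q N (Pi.single i c) = (q ^ 2) ^ i.val • Pi.single i c := by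
  funext k
  by_cases hk : k = i
  · subst hk
    simp [opA, pow_mul]
  · simp [opA, hk]

theorem opB_single (i : ZMod N) (c : ℂ) : opB N (Pi.single i c) = Pi.single (i + 1) c := by
  funext k
  simp [opB, Pi.single_apply, sub_eq_iff_eq_add]

theorem WeylInvariant.smul {W : Submodule ℂ V} (h : WeylInvariant X Y W) (a b : ℂ) :
    WeylInvariant (a • X) (b • Y) W :=
  ⟨fun w hw => W.smul_mem a (h.1 w hw), fun w hw => W.smul_mem b (h.2 w hw)⟩

theorem weylInvariant_span {s : Set V} (hX : ∀ w ∈ s, X w ∈ Submodule.span ℂ s)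
    (hY : ∀ w ∈ s, Y w ∈ Submodule.span ℂ s) : WeylInvariant X Y (Submodule.span ℂ s) :=
  ⟨fun _ hw => Submodule.span_le (p := (Submodule.span ℂ s).comap X) |>.mpr hX hw,
    fun _ hw => Submodule.span_le (p := (Submodule.span ℂ s).comap Y) |>.mpr hY hw⟩

variable [NeZero N]

theorem Module.Basis.equivFun_apply_eq_opA (B : Module.Basis (ZMod N) ℂ V)
    (hB : ∀ k, X (B k) = (q ^ 2) ^ k.val • B k) (w : V) :
    B.equivFun (X w) = opA q N (B.equivFun w) := by
  classical
  refine LinearMap.congr_fun (B.ext fun k => ?_ :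
    B.equivFun.toLinearMap ∘ₗ X = opA q N ∘ₗ B.equivFun.toLinearMap) w
  simp [hB, Finsupp.single_eq_pi_single, opA_single]

theorem Module.Basis.equivFun_apply_eq_opB (B : Module.Basis (ZMod N) ℂ V)
    (hB : ∀ k, Y (B k) = B (k + 1)) (w : V) :
    B.equivFun (Y w) = opB N (B.equivFun w) := by
  classical
  refine LinearMap.congr_fun (B.ext fun k => ?_ :
    B.equivFun.toLinearMap ∘ₗ Y = opB N ∘ₗ B.equivFun.toLinearMap) w
  simp [hB, Finsupp.single_eq_pi_single, opB_single]

theorem exists_equiv_opA_opB [FiniteDimensional ℂ V] [Nontrivial V]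
    (hq : IsPrimitiveRoot (q ^ 2) N) (hXY : X * Y = q ^ 2 • (Y * X)) (hX : X ^ N = 1)
    (hY : Y ^ N = 1) (hirr : ∀ W : Submodule ℂ V, WeylInvariant X Y W → W = ⊥ ∨ W = ⊤) :
    ∃ φ : V ≃ₗ[ℂ] CN N, ∀ w : V, φ (X w) = opA q N (φ w) ∧ φ (Y w) = opB N (φ w) := by
  have hYinj : Function.Injective Y :=
    (Module.End.isUnit_iff Y).mp (IsUnit.of_pow_eq_one hY (NeZero.ne N)) |>.injective
  obtain ⟨w, hw⟩ := Module.End.exists_hasEigenvector_one_of_mul_eq_smul hq hXY hX hYinj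
  set b : ZMod N → V := fun k => (Y ^ k.val) w
  have hXb (k : ZMod N) : X.HasEigenvector ((q ^ 2) ^ k.val) (b k) := by
    simpa using hw.pow_apply_of_mul_eq_smul_s2 hXY hYinj k.val
  have hYb (k : ZMod N) : Y (b k) = b (k + 1) := by
    simp only [b, pow_zmod_val_add_one hY, pow_succ', Module.End.mul_apply]
  have hli : LinearIndependent ℂ b := by
    refine X.eigenvectors_linearIndependent' _ (fun k l hkl => ?_) b hXb
    exact ZMod.val_injective N (hq.pow_inj (ZMod.val_lt k) (ZMod.val_lt l) hkl)
  have hspan : Submodule.span ℂ (Set.range b) = ⊤ := by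
    refine (hirr _ (weylInvariant_span ?_ ?_)).resolve_left fun h0 => (hXb 0).2 ?_
    · rintro _ ⟨k, rfl⟩
      rw [(hXb k).apply_eq_smul]
      exact Submodule.smul_mem _ _ (Submodule.subset_span ⟨k, rfl⟩)
    · rintro _ ⟨k, rfl⟩
      exact hYb k ▸ Submodule.subset_span ⟨k + 1, rfl⟩
    · simpa [h0] using Submodule.subset_span (R := ℂ) (Set.mem_range_self (f := b) 0)
  let B := Module.Basis.mk hli hspan.ge
  refine ⟨B.equivFun, fun v => ⟨B.equivFun_apply_eq_opA (fun k => ?_) v,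
    B.equivFun_apply_eq_opB (fun k => ?_) v⟩⟩
  · simpa [B] using (hXb k).apply_eq_smul
  · simpa [B] using hYb k

end StandardPair

/-- an irreducible Weyl pair with X^N = x·Id, Y^N = y·Id is isomorphic,
for every choice of N-th roots u, v of x, y, to the standard pair (uA, vB) on ℂ^N. -/
theorem stmt2 (N : ℕ) (hN : 1 ≤ N) (q : ℂ) (hq : IsPrimitiveRoot (q ^ 2) N)
    (V : Type*) [AddCommGroup V] [Module ℂ V] [FiniteDimensional ℂ V]
    (X Y : Module.End ℂ V) (h : IsIrreducibleWeylPair q X Y)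
    (x y : ℂ) (hx : x ≠ 0) (hy : y ≠ 0)
    (hX : X ^ N = x • (1 : Module.End ℂ V)) (hY : Y ^ N = y • (1 : Module.End ℂ V)) :
    ∀ u v : ℂ, u ^ N = x → v ^ N = y →
      ∃ φ : V ≃ₗ[ℂ] CN N, ∀ w : V,
        φ (X w) = (u • opA q N) (φ w) ∧ φ (Y w) = (v • opB N) (φ w) := by
  intro u v hu hv
  have : NeZero N := ⟨by omega⟩
  obtain ⟨⟨-, -, hXY⟩, _, hirr⟩ := h
  have hu0 : u ≠ 0 := (pow_ne_zero_iff (NeZero.ne N)).mp (hu ▸ hx)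
  have hv0 : v ≠ 0 := (pow_ne_zero_iff (NeZero.ne N)).mp (hv ▸ hy)
  have hXY' : (u⁻¹ • X) * (v⁻¹ • Y) = q ^ 2 • ((v⁻¹ • Y) * (u⁻¹ • X)) := by
    rw [smul_mul_smul_comm, smul_mul_smul_comm, hXY, smul_comm, mul_comm]
  have hirr' (W : Submodule ℂ V) (hW : WeylInvariant (u⁻¹ • X) (v⁻¹ • Y) W) : W = ⊥ ∨ W = ⊤ :=
    hirr W (by simpa [smul_inv_smul₀ hu0, smul_inv_smul₀ hv0] using hW.smul u v)
  obtain ⟨φ, hφ⟩ := exists_equiv_opA_opB hq hXY' (inv_smul_pow_eq_one hX hu hx)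
    (inv_smul_pow_eq_one hY hv hy) hirr'
  refine ⟨φ, fun w => ⟨?_, ?_⟩⟩
  · rw [← smul_inv_smul₀ hu0 (X w), map_smul, ← LinearMap.smul_apply, (hφ w).1]
    rfl
  · rw [← smul_inv_smul₀ hv0 (Y w), map_smul, ← LinearMap.smul_apply, (hφ w).2]
    rfl

end
end

section
/- Let R be an associative ℂ-algebra with unit, let N ≥ 1 be an integer, let ζ ∈ ℂ be a primitive N-th root of unity, and let P, Q ∈ R satisfy QP = ζ·PQ. Then (P + Q)^N = P^N + Q^N. -/
/-!
If `Q * P = q • (P * Q)`, expanding `(P + Q) ^ n` gives the Gaussian binomial coefficients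
`[n, k]_q` in place of the ordinary ones. They satisfy
`(q ^ (k + 1) - 1) [n, k + 1]_q = (q ^ (n - k) - 1) [n, k]_q`, so for `q` a primitive `N`-th
root of unity and `0 < k < N` we get `(q ^ k - 1) [N, k]_q = (q ^ N - 1) [N - 1, k - 1]_q = 0`
with `q ^ k ≠ 1`: only the two extreme terms `P ^ N` and `Q ^ N` survive.
-/

open Finset

/-- The Gaussian binomial coefficient `[n, k]_q`, through the `q`-Pascal rule that matches
multiplying by `P + Q` on the left. -/
def qBinom {S : Type*} [CommSemiring S] (q : S) : ℕ → ℕ → S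
  | _, 0 => 1
  | 0, _ + 1 => 0
  | n + 1, k + 1 => qBinom q n k + q ^ (k + 1) * qBinom q n (k + 1)

section CommSemiring

variable {S : Type*} [CommSemiring S] (q : S)

@[simp]
theorem qBinom_zero_right (n : ℕ) : qBinom q n 0 = 1 := by
  cases n <;> rfl

theorem qBinom_succ_succ (n k : ℕ) :
    qBinom q (n + 1) (k + 1) = qBinom q n k + q ^ (k + 1) * qBinom q n (k + 1) := rfl

theorem qBinom_eq_zero_of_lt : ∀ {n k : ℕ}, n < k → qBinom q n k = 0
  | 0, _ + 1, _ => rfl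
  | n + 1, k + 1, h => by
    rw [qBinom_succ_succ, qBinom_eq_zero_of_lt (by omega), qBinom_eq_zero_of_lt (by omega),
      mul_zero, add_zero]

@[simp]
theorem qBinom_self : ∀ n : ℕ, qBinom q n n = 1
  | 0 => rfl
  | n + 1 => by rw [qBinom_succ_succ, qBinom_self n, qBinom_eq_zero_of_lt q n.lt_succ_self,
      mul_zero, add_zero]

end CommSemiring

section CommRing

variable {S : Type*} [CommRing S] (q : S)

theorem pow_sub_one_mul_qBinom_succ (n k : ℕ) :
    (q ^ (k + 1) - 1) * qBinom q n (k + 1) = (q ^ (n - k) - 1) * qBinom q n k := by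
  induction n generalizing k with
  | zero => simp [qBinom]
  | succ n ih =>
    cases k with
    | zero =>
      have := ih 0
      simp only [qBinom_succ_succ, qBinom_zero_right, zero_add, Nat.sub_zero] at this ⊢
      linear_combination q * this
    | succ k =>
      obtain hnk | ⟨d, rfl⟩ : n ≤ k ∨ ∃ d, n = k + d + 1 :=
        (le_or_gt n k).imp id fun h => ⟨n - k - 1, by omega⟩
      · rw [qBinom_eq_zero_of_lt q (by omega : n + 1 < k + 2), Nat.sub_eq_zero_of_le (by omega)]
        ring
      · have h₁ := ih k
        have h₂ := ih (k + 1)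
        rw [show k + d + 1 - k = d + 1 by omega] at h₁
        rw [show k + d + 1 - (k + 1) = d by omega] at h₂
        rw [show k + d + 1 + 1 - (k + 1) = d + 1 by omega, qBinom_succ_succ q (k + d + 1) (k + 1),
          qBinom_succ_succ q (k + d + 1) k]
        linear_combination q ^ (k + 2) * h₂ + h₁

variable {q} in
theorem IsPrimitiveRoot.qBinom_eq_zero [NoZeroDivisors S] {N k : ℕ} (hq : IsPrimitiveRoot q N)
    (hk₀ : 0 < k) (hkN : k < N) : qBinom q N k = 0 := by
  obtain ⟨m, rfl⟩ : ∃ m, N = m + 1 := ⟨N - 1, by omega⟩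
  obtain ⟨j, rfl⟩ : ∃ j, k = j + 1 := ⟨k - 1, by omega⟩
  have hpow : q ^ (m - j) * q ^ (j + 1) = 1 := by
    rw [← pow_add, show m - j + (j + 1) = m + 1 by omega, hq.pow_eq_one]
  have hunit : q ^ (j + 1) - 1 ≠ 0 := sub_ne_zero.mpr (hq.pow_ne_one_of_pos_of_lt hk₀.ne' hkN)
  refine (mul_eq_zero.mp ?_).resolve_left hunit
  rw [qBinom_succ_succ]
  linear_combination q ^ (j + 1) * pow_sub_one_mul_qBinom_succ q m j + qBinom q m j * hpow

end CommRing

section QCommuting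

variable {S : Type*} [CommSemiring S] {R : Type*} [Semiring R] [Algebra S R] {q : S} {P Q : R}

theorem mul_pow_of_mul_eq_smul (h : Q * P = q • (P * Q)) :
    ∀ k : ℕ, Q * P ^ k = q ^ k • (P ^ k * Q)
  | 0 => by simp
  | k + 1 => by
    rw [pow_succ, ← mul_assoc, mul_pow_of_mul_eq_smul h k, smul_mul_assoc, mul_assoc, h,
      mul_smul_comm, smul_smul, ← mul_assoc, ← pow_succ, pow_succ q]

theorem add_pow_of_mul_eq_smul (h : Q * P = q • (P * Q)) (n : ℕ) :
    (P + Q) ^ n = ∑ k ∈ range (n + 1), qBinom q n k • (P ^ k * Q ^ (n - k)) := by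
  let t : ℕ → ℕ → R := fun n k => qBinom q n k • (P ^ k * Q ^ (n - k))
  change (P + Q) ^ n = ∑ k ∈ range (n + 1), t n k
  have h_first (n : ℕ) : t n 0 = Q ^ n := by simp [t]
  have h_last (n : ℕ) : t n (n + 1) = 0 := by simp [t, qBinom_eq_zero_of_lt q n.lt_succ_self]
  have h_middle (n i : ℕ) (hi : i ∈ range (n + 1)) :
      t (n + 1) (i + 1) = P * t n i + Q * t n (i + 1) := by
    rw [mem_range, Nat.lt_succ_iff, le_iff_lt_or_eq] at hi
    simp only [t, qBinom_succ_succ, add_smul, mul_smul_comm, ← mul_assoc, ← pow_succ',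
      Nat.add_sub_add_right]
    congr 1
    rcases hi with hi | rfl
    · rw [mul_pow_of_mul_eq_smul h, smul_mul_assoc, smul_smul, mul_assoc, ← pow_succ',
        show n - (i + 1) + 1 = n - i by omega, mul_comm]
    · simp [qBinom_eq_zero_of_lt q i.lt_succ_self]
  induction n with
  | zero => simp [t]
  | succ n ih =>
    rw [sum_range_succ', h_first, sum_congr rfl (h_middle n), sum_add_distrib, add_assoc,
      pow_succ' (P + Q), ih, add_mul, mul_sum, mul_sum]
    congr 1
    rw [sum_range_succ', sum_range_succ, h_first, h_last, mul_zero, add_zero, pow_succ']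

end QCommuting

/-- if ζ is a primitive N-th root of unity and Q P = ζ·P Q in an
associative unital ℂ-algebra, then (P + Q)^N = P^N + Q^N. -/
theorem stmt4 (R : Type*) [Ring R] [Algebra ℂ R] (N : ℕ) (hN : 1 ≤ N)
    (ζ : ℂ) (hζ : IsPrimitiveRoot ζ N) (P Q : R) (hPQ : Q * P = ζ • (P * Q)) :
    (P + Q) ^ N = P ^ N + Q ^ N := by
  rw [add_pow_of_mul_eq_smul hPQ, sum_range_succ, sum_eq_single_of_mem 0 (mem_range.mpr hN)]
  · simp [add_comm]
  · intro k hk hk₀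
    rw [hζ.qBinom_eq_zero (Nat.pos_of_ne_zero hk₀) (mem_range.mp hk), zero_smul]
end

section
/- Let μ = (uA, vB) and ν = (u′A, v′B) be standard Weyl pairs on ℂ^N, with x_μ = u^N, y_μ = v^N, x_ν = u′^N, y_ν = v′^N. Then the endomorphisms 𝕏 = X_μ⊗X_ν and 𝕐 = X_μ^{-1}⊗Y_ν + Y_μ⊗Id of ℂ^N ⊗ ℂ^N satisfy 𝕏𝕐 = q^2·𝕐𝕏, 𝕏 is invertible, 𝕏^N = (x_μ·x_ν)·Id and 𝕐^N = (x_μ^{-1}·y_ν + y_μ)·Id; in particular, if x_μ^{-1}·y_ν + y_μ ≠ 0, then 𝕐 is invertible and (𝕏, 𝕐) is a Weyl pair on ℂ^N ⊗ ℂ^N. -/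
open TensorProduct

noncomputable section

/-! The operators `A` and `B` have scalar `N`-th powers and satisfy `A B = q² B A`. The two
summands `Y_μ ⊗ 1` and `X_μ⁻¹ ⊗ Y_ν` of `𝕐` again `q²`-commute, so the `q`-binomial identity
`(x + y) ^ N = x ^ N + y ^ N` for `x y = ζ y x`, `ζ` a primitive `N`-th root of unity, makes
`𝕐 ^ N` the sum of two scalars. For invertible `x` write `y = z x`: then
`(x + y) ^ N = ∏ i < N, (1 + ζ ^ i z) · x ^ N`. Since the roots of `X ^ N - 1` are the `ζ ^ i`,
the product is `1 + ζ ^ (N(N-1)/2) z ^ N`, and `ζ ^ (N(N-1)/2)` is exactly the factor by which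
`(z x) ^ N = y ^ N` differs from `z ^ N x ^ N`. -/

def QCommute {K R : Type*} [CommRing K] [Ring R] [Algebra K R] (ζ : K) (a b : R) : Prop :=
  a * b = ζ • (b * a)

namespace QCommute

variable {K R : Type*} [CommRing K] [Ring R] [Algebra K R] {ζ : K} {a b c x z : R}

theorem add_right (h : QCommute ζ a b) (h' : QCommute ζ a c) : QCommute ζ a (b + c) := by
  rw [QCommute, mul_add, add_mul, h, h', smul_add]

theorem smul (h : QCommute ζ a b) (c d : K) : QCommute ζ (c • a) (d • b) := by
  rw [QCommute, smul_mul_smul_comm, smul_mul_smul_comm, h, smul_comm, mul_comm c d]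

theorem inverse_right (h : QCommute ζ a b) (ha : IsUnit a) : QCommute ζ b (Ring.inverse a) :=
  calc b * Ring.inverse a = Ring.inverse a * (a * b) * Ring.inverse a := by
        rw [Ring.inverse_mul_cancel_left _ _ ha]
    _ = ζ • (Ring.inverse a * b) := by
        rw [h, mul_smul_comm, smul_mul_assoc, ← mul_assoc, Ring.mul_inverse_cancel_right _ _ ha]

theorem pow_left (h : QCommute ζ x z) (n : ℕ) : QCommute (ζ ^ n) (x ^ n) z := by
  induction n with
  | zero => simp [QCommute]
  | succ n ih =>
    rw [QCommute] at ih ⊢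
    rw [pow_succ', mul_assoc, ih, mul_smul_comm, ← mul_assoc, h, smul_mul_assoc, smul_smul,
      mul_assoc, pow_succ]

theorem mul_pow (h : QCommute ζ x z) (n : ℕ) :
    (z * x) ^ n = ζ ^ (∑ i ∈ Finset.range n, i) • (z ^ n * x ^ n) := by
  induction n with
  | zero => simp
  | succ n ih =>
    rw [pow_succ, ih, smul_mul_assoc, mul_assoc, ← mul_assoc (x ^ n), h.pow_left n,
      smul_mul_assoc, mul_smul_comm, smul_smul, Finset.sum_range_succ, pow_add]
    simp only [pow_succ, mul_assoc]

theorem one_add_mul_pow_eq_aeval (h : QCommute ζ x z) (n : ℕ) :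
    ((1 + z) * x) ^ n =
      Polynomial.aeval z (∏ i ∈ Finset.range n, (1 + Polynomial.C (ζ ^ i) * Polynomial.X)) *
        x ^ n := by
  induction n with
  | zero => simp
  | succ n ih =>
    have hcomm : x ^ n * (1 + z) = (1 + ζ ^ n • z) * x ^ n := by
      rw [mul_add, add_mul, mul_one, one_mul, h.pow_left n, smul_mul_assoc]
    rw [pow_succ, ih, ← mul_assoc, mul_assoc _ (x ^ n), hcomm, Finset.prod_range_succ, map_mul]
    simp only [map_add, map_one, map_mul, Polynomial.aeval_C, Polynomial.aeval_X,
      Algebra.smul_def, pow_succ, mul_assoc]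

end QCommute

namespace IsPrimitiveRoot

variable {K : Type*} [CommRing K] [IsDomain K] {ζ : K} {n : ℕ}

theorem prod_sub_pow_mul (hζ : IsPrimitiveRoot ζ n) (hn : 0 < n) (s a : K) :
    ∏ i ∈ Finset.range n, (s - ζ ^ i * a) = s ^ n - a ^ n := by
  simpa [Polynomial.eval_prod] using
    (congrArg (Polynomial.eval s) (X_pow_sub_C_eq_prod hζ hn rfl)).symm

theorem pow_sum_range (hζ : IsPrimitiveRoot ζ n) (hn : 0 < n) :
    ζ ^ (∑ i ∈ Finset.range n, i) = -(-1) ^ n := by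
  have h := hζ.prod_sub_pow_mul hn 0 1
  simp only [zero_sub, mul_one, Finset.prod_neg, Finset.card_range, zero_pow hn.ne', one_pow] at h
  have hsq : ((-1 : K) ^ n) ^ 2 = 1 := by rw [← pow_mul, mul_comm, pow_mul, neg_one_sq, one_pow]
  rw [← Finset.prod_pow_eq_pow_sum]
  linear_combination (-1 : K) ^ n * h - (∏ i ∈ Finset.range n, ζ ^ i) * hsq

theorem prod_one_add_C_mul_X (hζ : IsPrimitiveRoot ζ n) (hn : 0 < n) :
    ∏ i ∈ Finset.range n, (1 + Polynomial.C (ζ ^ i) * Polynomial.X) =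
      1 + Polynomial.C (ζ ^ (∑ i ∈ Finset.range n, i)) * Polynomial.X ^ n := by
  have h := (hζ.map_of_injective Polynomial.C_injective).prod_sub_pow_mul hn 1 (-Polynomial.X)
  simp only [← map_pow, mul_neg, sub_neg_eq_add] at h
  rw [h, hζ.pow_sum_range hn, neg_pow, one_pow]
  simp only [map_neg, map_pow, map_one]
  ring

theorem one_add_mul_pow {R : Type*} [Ring R] [Algebra K R] {x z : R}
    (hζ : IsPrimitiveRoot ζ n) (hn : 0 < n) (h : QCommute ζ x z) :
    ((1 + z) * x) ^ n = x ^ n + (z * x) ^ n := by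
  rw [h.one_add_mul_pow_eq_aeval, hζ.prod_one_add_C_mul_X hn, h.mul_pow]
  simp [Algebra.smul_def, add_mul, mul_assoc]

theorem add_pow_of_qCommute {R : Type*} [Ring R] [Algebra K R] {x y : R}
    (hζ : IsPrimitiveRoot ζ n) (hn : 0 < n) (hx : IsUnit x) (h : QCommute ζ x y) :
    (x + y) ^ n = x ^ n + y ^ n := by
  set z := y * Ring.inverse x
  have hy : z * x = y := Ring.inverse_mul_cancel_right _ _ hx
  have hz : QCommute ζ x z := by
    rw [QCommute, hy, ← mul_assoc, h, smul_mul_assoc, mul_assoc,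
      Ring.mul_inverse_cancel _ hx, mul_one]
  rw [← hy, ← one_add_mul_pow hζ hn hz, add_mul, one_mul]

end IsPrimitiveRoot

section ScalarPowers

variable {K R : Type*} [Field K] [Ring R] [Algebra K R] {a : R} {c : K} {n : ℕ}

theorem isUnit_smul_one (hc : c ≠ 0) : IsUnit (c • (1 : R)) := by
  rw [← Algebra.algebraMap_eq_smul_one]
  exact (IsUnit.mk0 c hc).map (algebraMap K R)

theorem isUnit_of_pow_eq_smul_one (hn : n ≠ 0) (hc : c ≠ 0) (h : a ^ n = c • 1) : IsUnit a :=
  (isUnit_pow_iff hn).mp (h ▸ isUnit_smul_one hc)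

theorem ringInverse_pow_eq_smul_one (hc : c ≠ 0) (h : a ^ n = c • 1) :
    Ring.inverse a ^ n = c⁻¹ • 1 := by
  rw [Ring.inverse_pow, ← mul_one (Ring.inverse _),
    Ring.inverse_mul_eq_iff_eq_mul _ _ _ (h ▸ isUnit_smul_one hc), h, smul_mul_smul_comm,
    mul_inv_cancel₀ hc, one_mul, one_smul]

end ScalarPowers

section TensorPair

variable {K V W : Type*} [Field K] [AddCommGroup V] [Module K V] [AddCommGroup W] [Module K W]
  {ζ : K} {n : ℕ}

theorem map_pow_eq_smul_one {f : Module.End K V} {g : Module.End K W} {c d : K}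
    (hf : f ^ n = c • 1) (hg : g ^ n = d • 1) : map f g ^ n = (c * d) • 1 := by
  rw [TensorProduct.map_pow, hf, hg, map_smul_left, map_smul_right, TensorProduct.map_one,
    smul_smul]

theorem QCommute.map_of_commute {a b : Module.End K V} {c d : Module.End K W}
    (h : QCommute ζ a b) (h' : Commute c d) : QCommute ζ (map a c) (map b d) := by
  rw [QCommute, ← TensorProduct.map_mul, ← TensorProduct.map_mul, h, h'.eq, map_smul_left]

theorem Commute.map_of_qCommute {a b : Module.End K V} {c d : Module.End K W}
    (h : Commute a b) (h' : QCommute ζ c d) : QCommute ζ (map a c) (map b d) := by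
  rw [QCommute, ← TensorProduct.map_mul, ← TensorProduct.map_mul, h.eq, h', map_smul_right]

variable {X Y : Module.End K V} {X' Y' : Module.End K W}

theorem qCommute_map_map_inverse_add_map_one (hX : IsUnit X) (h : QCommute ζ X Y)
    (h' : QCommute ζ X' Y') :
    QCommute ζ (map X X') (map (Ring.inverse X) Y' + map Y 1) :=
  have hXinv : Commute X (Ring.inverse X) :=
    (Ring.mul_inverse_cancel X hX).trans (Ring.inverse_mul_cancel X hX).symm
  (hXinv.map_of_qCommute h').add_right (h.map_of_commute (Commute.one_right X'))

theorem map_inverse_add_map_one_pow (hζ : IsPrimitiveRoot ζ n) (hn : 0 < n)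
    (h : QCommute ζ X Y) {x y y' : K} (hx : x ≠ 0) (hy : y ≠ 0) (hXn : X ^ n = x • 1)
    (hYn : Y ^ n = y • 1) (hY'n : Y' ^ n = y' • 1) :
    (map (Ring.inverse X) Y' + map Y 1) ^ n = (x⁻¹ * y' + y) • 1 := by
  have hQn : map Y (1 : Module.End K W) ^ n = y • 1 := by
    rw [TensorProduct.map_pow, hYn, one_pow, map_smul_left, TensorProduct.map_one]
  have hPn : map (Ring.inverse X) Y' ^ n = (x⁻¹ * y') • 1 :=
    map_pow_eq_smul_one (ringInverse_pow_eq_smul_one hx hXn) hY'n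
  have hQP : QCommute ζ (map Y (1 : Module.End K W)) (map (Ring.inverse X) Y') :=
    (h.inverse_right (isUnit_of_pow_eq_smul_one hn.ne' hx hXn)).map_of_commute (Commute.one_left Y')
  rw [add_comm, hζ.add_pow_of_qCommute hn (isUnit_of_pow_eq_smul_one hn.ne' hy hQn) hQP, hQn,
    hPn, ← add_smul, add_comm y]

end TensorPair

section StandardPair

variable {N : ℕ} {q : ℂ}

theorem opA_pow_apply (n : ℕ) (f : CN N) (k : ZMod N) :
    (opA q N ^ n) f k = ((q ^ 2) ^ k.val) ^ n * f k := by
  induction n with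
  | zero => simp
  | succ n ih =>
    rw [pow_succ', Module.End.mul_apply]
    change q ^ (2 * k.val) * (opA q N ^ n) f k = _
    rw [ih, pow_mul, pow_succ']
    ring

theorem opB_pow_apply (n : ℕ) (f : CN N) (k : ZMod N) : (opB N ^ n) f k = f (k - n) := by
  induction n generalizing f with
  | zero => simp
  | succ n ih =>
    rw [pow_succ, Module.End.mul_apply, ih]
    change f (k - n - 1) = _
    push_cast
    ring_nf

theorem opA_pow_eq_one (hq : (q ^ 2) ^ N = 1) : opA q N ^ N = 1 := by
  refine LinearMap.ext fun f => funext fun k => ?_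
  rw [opA_pow_apply, ← pow_mul, mul_comm k.val, pow_mul, hq, one_pow, one_mul]
  rfl

theorem opB_pow_eq_one : opB N ^ N = 1 := by
  refine LinearMap.ext fun f => funext fun k => ?_
  rw [opB_pow_apply, ZMod.natCast_self, sub_zero]
  rfl

theorem qCommute_opA_opB [NeZero N] (hq : (q ^ 2) ^ N = 1) :
    QCommute (q ^ 2) (opA q N) (opB N) := by
  refine LinearMap.ext fun f => funext fun k => ?_
  change q ^ (2 * k.val) * f (k - 1) = q ^ 2 * (q ^ (2 * (k - 1).val) * f (k - 1))
  have hχ : AddChar.zmodChar N hq 1 = q ^ 2 := by simpa using AddChar.zmodChar_apply' hq 1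
  have hk : (q ^ 2) ^ k.val = (q ^ 2) ^ (k - 1).val * q ^ 2 :=
    calc (q ^ 2) ^ k.val = AddChar.zmodChar N hq (k - 1 + 1) := by rw [sub_add_cancel]; rfl
      _ = (q ^ 2) ^ (k - 1).val * q ^ 2 := by rw [AddChar.map_add_eq_mul, hχ]; rfl
  rw [pow_mul, pow_mul, hk]
  ring

end StandardPair

theorem stmt5_general (N : ℕ) (hN : 1 ≤ N) (q : ℂ) (hq : IsPrimitiveRoot (q ^ 2) N)
    (u v u' v' : ℂ) (hu : u ≠ 0) (hv : v ≠ 0) (hu' : u' ≠ 0) :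
    let Xμ : Module.End ℂ (CN N) := u • opA q N
    let Yμ : Module.End ℂ (CN N) := v • opB N
    let Xν : Module.End ℂ (CN N) := u' • opA q N
    let Yν : Module.End ℂ (CN N) := v' • opB N
    let 𝕏 : Module.End ℂ (CN N ⊗[ℂ] CN N) := TensorProduct.map Xμ Xν
    let 𝕐 : Module.End ℂ (CN N ⊗[ℂ] CN N) :=
      TensorProduct.map (Ring.inverse Xμ) Yν + TensorProduct.map Yμ 1
    𝕏 * 𝕐 = q ^ 2 • (𝕐 * 𝕏) ∧ IsUnit 𝕏 ∧
    𝕏 ^ N = (u ^ N * u' ^ N) • (1 : Module.End ℂ (CN N ⊗[ℂ] CN N)) ∧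
    𝕐 ^ N = ((u ^ N)⁻¹ * v' ^ N + v ^ N) • (1 : Module.End ℂ (CN N ⊗[ℂ] CN N)) ∧
    ((u ^ N)⁻¹ * v' ^ N + v ^ N ≠ 0 → IsUnit 𝕐 ∧ IsWeylPair q 𝕏 𝕐) := by
  intro Xμ Yμ Xν Yν 𝕏 𝕐
  have hN0 : N ≠ 0 := Nat.one_le_iff_ne_zero.mp hN
  have : NeZero N := ⟨hN0⟩
  have hq1 : (q ^ 2) ^ N = 1 := hq.pow_eq_one
  have hXμ : Xμ ^ N = u ^ N • 1 := by rw [smul_pow, opA_pow_eq_one hq1]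
  have hYμ : Yμ ^ N = v ^ N • 1 := by rw [smul_pow, opB_pow_eq_one]
  have hXν : Xν ^ N = u' ^ N • 1 := by rw [smul_pow, opA_pow_eq_one hq1]
  have hYν : Yν ^ N = v' ^ N • 1 := by rw [smul_pow, opB_pow_eq_one]
  have hμ : QCommute (q ^ 2) Xμ Yμ := (qCommute_opA_opB hq1).smul u v
  have hν : QCommute (q ^ 2) Xν Yν := (qCommute_opA_opB hq1).smul u' v'
  have hXμunit : IsUnit Xμ := isUnit_of_pow_eq_smul_one hN0 (pow_ne_zero N hu) hXμ
  have h𝕏𝕐 : QCommute (q ^ 2) 𝕏 𝕐 :=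
    qCommute_map_map_inverse_add_map_one hXμunit hμ hν
  have h𝕏N : 𝕏 ^ N = (u ^ N * u' ^ N) • 1 := map_pow_eq_smul_one hXμ hXν
  have h𝕏unit : IsUnit 𝕏 :=
    isUnit_of_pow_eq_smul_one (a := 𝕏) hN0 (by simp [hu, hu']) h𝕏N
  have h𝕐N : 𝕐 ^ N = ((u ^ N)⁻¹ * v' ^ N + v ^ N) • 1 :=
    map_inverse_add_map_one_pow hq hN hμ (pow_ne_zero N hu) (pow_ne_zero N hv) hXμ hYμ hYν
  refine ⟨h𝕏𝕐, h𝕏unit, h𝕏N, h𝕐N, fun hc => ?_⟩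
  have h𝕐unit : IsUnit 𝕐 := isUnit_of_pow_eq_smul_one (a := 𝕐) hN0 hc h𝕐N
  exact ⟨h𝕐unit, h𝕏unit, h𝕐unit, h𝕏𝕐⟩

/-- for standard Weyl pairs μ = (uA, vB) and ν = (u′A, v′B), the
operators 𝕏 = X_μ⊗X_ν and 𝕐 = X_μ⁻¹⊗Y_ν + Y_μ⊗Id on ℂ^N ⊗ ℂ^N satisfy
𝕏𝕐 = q²𝕐𝕏, 𝕏 is invertible, 𝕏^N = x_μx_ν·Id, 𝕐^N = (x_μ⁻¹y_ν + y_μ)·Id, and if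
x_μ⁻¹y_ν + y_μ ≠ 0 then 𝕐 is invertible and (𝕏,𝕐) is a Weyl pair. -/
theorem stmt5 (N : ℕ) (hN : 1 ≤ N) (q : ℂ) (hq : IsPrimitiveRoot (q ^ 2) N)
    (u v u' v' : ℂ) (hu : u ≠ 0) (hv : v ≠ 0) (hu' : u' ≠ 0) (hv' : v' ≠ 0) :
    let Xμ : Module.End ℂ (CN N) := u • opA q N
    let Yμ : Module.End ℂ (CN N) := v • opB N
    let Xν : Module.End ℂ (CN N) := u' • opA q N
    let Yν : Module.End ℂ (CN N) := v' • opB N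
    let 𝕏 : Module.End ℂ (CN N ⊗[ℂ] CN N) := TensorProduct.map Xμ Xν
    let 𝕐 : Module.End ℂ (CN N ⊗[ℂ] CN N) :=
      TensorProduct.map (Ring.inverse Xμ) Yν + TensorProduct.map Yμ 1
    𝕏 * 𝕐 = q ^ 2 • (𝕐 * 𝕏) ∧ IsUnit 𝕏 ∧
    𝕏 ^ N = (u ^ N * u' ^ N) • (1 : Module.End ℂ (CN N ⊗[ℂ] CN N)) ∧
    𝕐 ^ N = ((u ^ N)⁻¹ * v' ^ N + v ^ N) • (1 : Module.End ℂ (CN N ⊗[ℂ] CN N)) ∧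
    ((u ^ N)⁻¹ * v' ^ N + v ^ N ≠ 0 → IsUnit 𝕐 ∧ IsWeylPair q 𝕏 𝕐) :=
  stmt5_general N hN q hq u v u' v' hu hv hu'

end
end

section
/- If (μ, ν) is a regular pair of standard Weyl pairs, then ℂ^N ⊗ ℂ^N decomposes as an internal direct sum of N subspaces W_1, …, W_N, each mapped into itself by X_μ⊗X_ν and by X_μ^{-1}⊗Y_ν + Y_μ⊗Id, and for each i there is a linear isomorphism ψ_i : ℂ^N → W_i satisfying ψ_i∘X_{μν} = (X_μ⊗X_ν)∘ψ_i and ψ_i∘Y_{μν} = (X_μ^{-1}⊗Y_ν + Y_μ⊗Id)∘ψ_i. -/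
open TensorProduct

noncomputable section

/-
The operator X_μ ⊗ X_ν is diagonal in the basis e_j ⊗ e_k; its eigenspaces are the
antidiagonals E_m = span {e_j ⊗ e_(m-j)}, each a copy of ℂ^N, and X_μ⁻¹ ⊗ Y_ν + Y_μ ⊗ Id maps
E_m to E_(m+1), acting in these coordinates as the single operator L = w A⁻¹ + v B with
w = v'/u. The operator L has the N distinct eigenvalues t with t^N = w^N + v^N = v''^N, with
explicit eigenvectors c_t, which therefore form a basis of ℂ^N. Writing u'' = u u' q^(2a) and
t = v'' ρ, the map e_m ↦ ρ^m c_t ∈ E_(a+m) intertwines μν with the tensor pair, and these N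
maps together are a bijection onto ℂ^N ⊗ ℂ^N.
-/

section

variable {N : ℕ} [NeZero N]

theorem ZMod.pow_val_add {M : Type*} [Monoid M] {ζ : M} (hζ : ζ ^ N = 1) (x y : ZMod N) :
    ζ ^ (x + y).val = ζ ^ x.val * ζ ^ y.val := by
  rw [ZMod.val_add, ← pow_eq_pow_mod _ hζ, pow_add]

theorem ZMod.pow_val_add_one {M : Type*} [Monoid M] {ζ : M} (hζ : ζ ^ N = 1)
    (x : ZMod N) : ζ ^ (x + 1).val = ζ ^ x.val * ζ := by
  rw [ZMod.pow_val_add hζ, ZMod.val_one_eq_one_mod, ← pow_eq_pow_mod _ hζ, pow_one]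

theorem IsPrimitiveRoot.exists_eq_mul_pow_val {K : Type*} [Field K]
    {ζ x y : K} (hζ : IsPrimitiveRoot ζ N) (hy : y ≠ 0) (h : x ^ N = y ^ N) :
    ∃ a : ZMod N, x = y * ζ ^ a.val := by
  obtain ⟨i, hi, hζi⟩ := hζ.eq_pow_of_pow_eq_one (ξ := x / y) (by
    rw [div_pow, h, div_self (pow_ne_zero _ hy)])
  exact ⟨i, by rw [ZMod.val_cast_of_lt hi, hζi, mul_div_cancel₀ _ hy]⟩

theorem IsPrimitiveRoot.pow_sub_pow_eq_prod_range {R : Type*} [CommRing R] [IsDomain R]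
    {ζ : R} (hζ : IsPrimitiveRoot ζ N) (x y : R) :
    x ^ N - y ^ N = ∏ i ∈ Finset.range N, (x - ζ ^ i * y) := by
  simpa [Polynomial.eval_prod] using
    congrArg (Polynomial.eval x) (X_pow_sub_C_eq_prod hζ (NeZero.pos N) (rfl : y ^ N = y ^ N))

theorem DirectSum.isInternal_range_of_bijective_lsum {ι R M V : Type*} [DecidableEq ι]
    [CommRing R] [AddCommGroup M] [Module R M] [AddCommGroup V] [Module R V] (ψ : ι → M →ₗ[R] V)
    (h : Function.Bijective (Finsupp.lsum R ψ)) :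
    DirectSum.IsInternal fun i => LinearMap.range (ψ i) := by
  have hrange : (fun i => LinearMap.range (ψ i)) =
      fun i => (LinearMap.range (Finsupp.lsingle i)).map (Finsupp.lsum R ψ) := by
    ext1 i
    rw [← LinearMap.range_comp, Finsupp.lsum_comp_lsingle]
  rw [hrange]
  refine DirectSum.isInternal_submodule_of_iSupIndep_of_iSup_eq_top
    ((Finsupp.lsum R ψ).iSupIndep_map h.injective (iSupIndep_range_lsingle ι R M)) ?_
  rw [← Submodule.map_iSup, Finsupp.iSup_lsingle_range, Submodule.map_top,
    LinearMap.range_eq_top.mpr h.surjective]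

theorem Finsupp.injective_of_injective_lsum {ι R M V : Type*} [CommSemiring R]
    [AddCommMonoid M] [Module R M] [AddCommMonoid V] [Module R V] (ψ : ι → M →ₗ[R] V)
    (h : Function.Injective (Finsupp.lsum R ψ)) (i : ι) : Function.Injective (ψ i) := by
  simpa [Function.comp_def] using h.comp (Finsupp.single_injective i)

end

namespace StandardWeyl

variable {N : ℕ}

def opDiag (ζ : ℂ) : Module.End ℂ (CN N) where
  toFun f k := ζ ^ k.val * f k
  map_add' f g := by funext k; simp [mul_add]
  map_smul' c f := by funext k; simp [smul_eq_mul]; ring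

@[simp] theorem opDiag_apply (ζ : ℂ) (f : CN N) (k : ZMod N) : opDiag ζ f k = ζ ^ k.val * f k :=
  rfl

theorem opA_eq_opDiag (q : ℂ) : opA q N = opDiag (q ^ 2) := by
  ext f k
  simp [opA, pow_mul]

theorem opDiag_mul_opDiag (α β : ℂ) :
    opDiag α * opDiag β = (opDiag (α * β) : Module.End ℂ (CN N)) := by
  ext f k
  simp [mul_pow, mul_assoc]

theorem opDiag_one : (opDiag 1 : Module.End ℂ (CN N)) = 1 := by
  ext f k
  simp

theorem inverse_smul_opA {q u : ℂ} (hq : q ≠ 0) (hu : u ≠ 0) :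
    Ring.inverse (u • opA q N) = u⁻¹ • opDiag (q ^ 2)⁻¹ := by
  have hq2 : q ^ 2 ≠ 0 := pow_ne_zero 2 hq
  have h₁ : u • opA q N * u⁻¹ • opDiag (q ^ 2)⁻¹ = 1 := by
    rw [smul_mul_smul, opA_eq_opDiag, opDiag_mul_opDiag, mul_inv_cancel₀ hu,
      mul_inv_cancel₀ hq2, opDiag_one, one_smul]
  have h₂ : u⁻¹ • opDiag (q ^ 2)⁻¹ * u • opA q N = 1 := by
    rw [smul_mul_smul, opA_eq_opDiag, opDiag_mul_opDiag, inv_mul_cancel₀ hu,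
      inv_mul_cancel₀ hq2, opDiag_one, one_smul]
  exact Ring.inverse_unit ⟨_, _, h₁, h₂⟩

theorem opDiag_single (ζ : ℂ) (j : ZMod N) (x : ℂ) :
    opDiag ζ (Pi.single j x) = ζ ^ j.val • Pi.single j x := by
  ext k
  rcases eq_or_ne k j with rfl | h <;> simp [*]

theorem opB_single (j : ZMod N) (x : ℂ) : opB N (Pi.single j x) = Pi.single (j + 1) x := by
  ext k
  simp [opB, Pi.single_apply, sub_eq_iff_eq_add]

variable [NeZero N]

def antidiag (m : ZMod N) : CN N →ₗ[ℂ] CN N ⊗[ℂ] CN N :=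
  ∑ j, (LinearMap.proj j).smulRight (Pi.single j 1 ⊗ₜ Pi.single (m - j) 1)

theorem antidiag_apply (m : ZMod N) (g : CN N) :
    antidiag m g = ∑ j, g j • (Pi.single j 1 ⊗ₜ[ℂ] Pi.single (m - j) 1) := by
  simp [antidiag]

def tensorCoord (j k : ZMod N) : CN N ⊗[ℂ] CN N →ₗ[ℂ] ℂ :=
  (TensorProduct.lid ℂ ℂ).toLinearMap ∘ₗ TensorProduct.map (LinearMap.proj j) (LinearMap.proj k)

theorem tensorCoord_antidiag (j k m : ZMod N) (g : CN N) :
    tensorCoord j k (antidiag m g) = if j + k = m then g j else 0 := by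
  simp only [tensorCoord, antidiag_apply, map_sum, map_smul, LinearMap.comp_apply, map_tmul,
    LinearEquiv.coe_coe, lid_tmul, LinearMap.proj_apply, Pi.single_apply, eq_sub_iff_add_eq,
    add_comm k, smul_eq_mul, mul_ite, mul_one, mul_zero]
  rw [Finset.sum_eq_single j (fun i _ hi => by simp [Ne.symm hi]) (by simp)]
  simp

theorem eq_zero_of_sum_antidiag_eq_zero (a : ZMod N) {G : ZMod N → CN N}
    (h : ∑ m, antidiag (a + m) (G m) = 0) : G = 0 := by
  funext m j
  simpa [map_sum, tensorCoord_antidiag] using congrArg (tensorCoord j (a + m - j)) h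

theorem map_opDiag_opDiag_antidiag {ζ : ℂ} (hζ : ζ ^ N = 1) (m : ZMod N) (g : CN N) :
    map (opDiag ζ) (opDiag ζ) (antidiag m g) = ζ ^ m.val • antidiag m g := by
  simp only [antidiag_apply, map_sum, map_smul, Finset.smul_sum, map_tmul, opDiag_single,
    smul_tmul', tmul_smul, smul_smul]
  refine Finset.sum_congr rfl fun j _ => ?_
  have hsplit := ZMod.pow_val_add hζ j (m - j)
  rw [add_sub_cancel] at hsplit
  rw [hsplit]
  congr 2
  ring

theorem map_opDiag_opB_antidiag (ζ : ℂ) (m : ZMod N) (g : CN N) :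
    map (opDiag ζ) (opB N) (antidiag m g) = antidiag (m + 1) (opDiag ζ g) := by
  simp only [antidiag_apply, map_sum, map_smul, map_tmul, opDiag_single, opB_single, opDiag_apply,
    smul_tmul', smul_smul]
  refine Finset.sum_congr rfl fun j _ => ?_
  rw [sub_add_eq_add_sub, mul_comm]

theorem map_opB_one_antidiag (m : ZMod N) (g : CN N) :
    map (opB N) 1 (antidiag m g) = antidiag (m + 1) (opB N g) := by
  simp only [antidiag_apply, map_sum, map_smul, map_tmul, opB_single, Module.End.one_apply]
  refine Fintype.sum_equiv (Equiv.addRight 1) _ _ fun j => ?_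
  simp [opB]

def opDiagShift (ζ w v : ℂ) : Module.End ℂ (CN N) := w • opDiag ζ + v • opB N

def tensorX (q u u' : ℂ) : Module.End ℂ (CN N ⊗[ℂ] CN N) :=
  map (u • opA q N) (u' • opA q N)

def tensorY (q u v v' : ℂ) : Module.End ℂ (CN N ⊗[ℂ] CN N) :=
  map (Ring.inverse (u • opA q N)) (v' • opB N) + map (v • opB N) 1

theorem tensorY_antidiag {q u : ℂ} (hq : q ≠ 0) (hu : u ≠ 0) (v v' : ℂ) (m : ZMod N)
    (g : CN N) :
    tensorY q u v v' (antidiag m g) =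
      antidiag (m + 1) (opDiagShift (q ^ 2)⁻¹ (u⁻¹ * v') v g) := by
  rw [tensorY, inverse_smul_opA hq hu, map_smul_left, map_smul_right, map_smul_left, smul_smul,
    LinearMap.add_apply, LinearMap.smul_apply, LinearMap.smul_apply, map_opDiag_opB_antidiag,
    map_opB_one_antidiag]
  simp [opDiagShift]

/- Solves `(t - ζ ^ j * w) * c j = v * c (j - 1)` downwards from `j = N - 1`; the equation at
`j = 0` then holds because `∏ i < N, (t - ζ ^ i * w) = t ^ N - w ^ N = v ^ N`. -/
variable (N) in
def diagShiftEigenvector (ζ w v t : ℂ) : CN N :=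
  fun j => v ^ j.val * ∏ i ∈ Finset.Ico (j.val + 1) N, (t - ζ ^ i * w)

theorem opDiagShift_eigenvector {ζ w v t : ℂ} (hζ : IsPrimitiveRoot ζ N)
    (ht : t ^ N = w ^ N + v ^ N) :
    opDiagShift ζ w v (diagShiftEigenvector N ζ w v t) = t • diagShiftEigenvector N ζ w v t := by
  have hprod : (t - w) * ∏ i ∈ Finset.Ico 1 N, (t - ζ ^ i * w) = v ^ N :=
    calc (t - w) * ∏ i ∈ Finset.Ico 1 N, (t - ζ ^ i * w)
        = ∏ i ∈ Finset.range N, (t - ζ ^ i * w) := by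
          rw [Finset.range_eq_Ico, Finset.prod_eq_prod_Ico_succ_bot (NeZero.pos N), pow_zero,
            one_mul]
      _ = v ^ N := by rw [← hζ.pow_sub_pow_eq_prod_range, ht, add_sub_cancel_left]
  obtain ⟨n, rfl⟩ : ∃ n, N = n + 1 := Nat.exists_eq_add_one.mpr (NeZero.pos N)
  funext j
  obtain ⟨s, hs, rfl⟩ : ∃ s < n + 1, (s : ZMod (n + 1)) = j :=
    ⟨j.val, j.val_lt, ZMod.natCast_zmod_val j⟩
  simp only [opDiagShift, diagShiftEigenvector, LinearMap.add_apply, LinearMap.smul_apply,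
    Pi.add_apply, Pi.smul_apply, opDiag_apply, opB, LinearMap.coe_mk, AddHom.coe_mk, smul_eq_mul,
    ZMod.val_cast_of_lt hs]
  cases s with
  | zero =>
    rw [Nat.cast_zero, zero_sub, ZMod.val_neg_one, Finset.Ico_self, Finset.prod_empty]
    linear_combination -hprod
  | succ s =>
    rw [Nat.cast_succ, add_sub_cancel_right, ZMod.val_cast_of_lt (by omega),
      Finset.prod_eq_prod_Ico_succ_bot (by omega : s + 1 < n + 1)]
    ring

theorem diagShiftEigenvector_ne_zero {ζ w v : ℂ} (hv : v ≠ 0) (t : ℂ) :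
    diagShiftEigenvector N ζ w v t ≠ 0 := by
  obtain ⟨n, rfl⟩ : ∃ n, N = n + 1 := Nat.exists_eq_add_one.mpr (NeZero.pos N)
  intro h
  have hlast := congrFun h (-1)
  rw [diagShiftEigenvector, ZMod.val_neg_one, Finset.Ico_self, Finset.prod_empty, mul_one,
    Pi.zero_apply] at hlast
  exact pow_ne_zero _ hv hlast

def cyclicMap (ρ : ℂ) (a : ZMod N) (c : CN N) : CN N →ₗ[ℂ] CN N ⊗[ℂ] CN N :=
  ∑ m, (LinearMap.proj m).smulRight (ρ ^ m.val • antidiag (a + m) c)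

theorem cyclicMap_apply (ρ : ℂ) (a : ZMod N) (c f : CN N) :
    cyclicMap ρ a c f = ∑ m, (f m * ρ ^ m.val) • antidiag (a + m) c := by
  simp [cyclicMap, smul_smul]

theorem cyclicMap_opA {q u u' u'' ρ : ℂ} {a : ZMod N} (hq : (q ^ 2) ^ N = 1)
    (ha : u'' = u * u' * (q ^ 2) ^ a.val) (c f : CN N) :
    cyclicMap ρ a c ((u'' • opA q N) f) = tensorX q u u' (cyclicMap ρ a c f) := by
  simp only [tensorX, opA_eq_opDiag, map_smul_left, map_smul_right, cyclicMap_apply, map_sum,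
    map_smul, LinearMap.smul_apply, map_opDiag_opDiag_antidiag hq, Finset.smul_sum, smul_smul]
  refine Finset.sum_congr rfl fun m _ => ?_
  simp only [opDiag_apply, ZMod.pow_val_add hq, ha]
  congr 1
  ring

theorem cyclicMap_opB {q u v v' v'' ρ : ℂ} {a : ZMod N} {c : CN N} (hq : q ≠ 0) (hu : u ≠ 0)
    (hρ : ρ ^ N = 1) (hc : opDiagShift (q ^ 2)⁻¹ (u⁻¹ * v') v c = (v'' * ρ) • c) (f : CN N) :
    cyclicMap ρ a c ((v'' • opB N) f) = tensorY q u v v' (cyclicMap ρ a c f) := by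
  simp only [cyclicMap_apply, map_sum, map_smul, tensorY_antidiag hq hu, hc, smul_smul]
  refine (Fintype.sum_equiv (Equiv.addRight 1) _ _ fun m => ?_).symm
  simp only [Equiv.coe_addRight, LinearMap.smul_apply, Pi.smul_apply, opB, LinearMap.coe_mk,
    AddHom.coe_mk, add_sub_cancel_right, smul_eq_mul, ZMod.pow_val_add_one hρ, ← add_assoc]
  congr 1
  ring

theorem lsum_cyclicMap_injective {ι : Type*} [Fintype ι] {ρ : ι → ℂ} (hρ : ∀ r, ρ r ≠ 0)
    (a : ZMod N) {c : ι → CN N} (hc : LinearIndependent ℂ c) :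
    Function.Injective (Finsupp.lsum ℂ fun r => cyclicMap (ρ r) a (c r)) := by
  rw [← LinearMap.ker_eq_bot, LinearMap.ker_eq_bot']
  intro F hF
  have hslices : ∑ m, antidiag (a + m) (∑ r, (F r m * ρ r ^ m.val) • c r) = 0 := by
    rw [← hF, Finsupp.lsum_apply, Finsupp.sum_fintype _ _ fun _ => map_zero _]
    simp only [cyclicMap_apply, map_sum, map_smul]
    exact Finset.sum_comm
  ext r m
  have hcoeff := Fintype.linearIndependent_iff.mp hc _
    (congrFun (eq_zero_of_sum_antidiag_eq_zero a hslices) m) r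
  simpa [hρ r] using hcoeff

theorem lsum_cyclicMap_bijective {ρ : Fin N → ℂ} (hρ : ∀ r, ρ r ≠ 0) (a : ZMod N)
    {c : Fin N → CN N} (hc : LinearIndependent ℂ c) :
    Function.Bijective (Finsupp.lsum ℂ fun r => cyclicMap (ρ r) a (c r)) := by
  have hinj := lsum_cyclicMap_injective hρ a hc
  refine ⟨hinj, (LinearMap.injective_iff_surjective_of_finrank_eq_finrank ?_).mp hinj⟩
  simp [Module.finrank_finsupp, Module.finrank_tensorProduct]

end StandardWeyl

open StandardWeyl

theorem stmt7_general (N : ℕ) (hN : 1 ≤ N) (q : ℂ) (hq : IsPrimitiveRoot (q ^ 2) N)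
    (u v u' v' u'' v'' : ℂ) (hu : u ≠ 0) (hv : v ≠ 0) (hu' : u' ≠ 0)
    (hv'' : v'' ≠ 0)
    (hx : u'' ^ N = u ^ N * u' ^ N) (hy : v'' ^ N = (u ^ N)⁻¹ * v' ^ N + v ^ N) :
    let Xμν : Module.End ℂ (CN N) := u'' • opA q N
    let Yμν : Module.End ℂ (CN N) := v'' • opB N
    let 𝕏 : Module.End ℂ (CN N ⊗[ℂ] CN N) := TensorProduct.map (u • opA q N) (u' • opA q N)
    let 𝕐 : Module.End ℂ (CN N ⊗[ℂ] CN N) :=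
      TensorProduct.map (Ring.inverse (u • opA q N)) (v' • opB N) +
        TensorProduct.map (v • opB N) 1
    ∃ W : Fin N → Submodule ℂ (CN N ⊗[ℂ] CN N),
      DirectSum.IsInternal W ∧
      (∀ i, ∀ t ∈ W i, 𝕏 t ∈ W i ∧ 𝕐 t ∈ W i) ∧
      (∀ i, ∃ ψ : CN N ≃ₗ[ℂ] W i, ∀ w : CN N,
        ((ψ (Xμν w) : CN N ⊗[ℂ] CN N)) = 𝕏 (ψ w) ∧
        ((ψ (Yμν w) : CN N ⊗[ℂ] CN N)) = 𝕐 (ψ w)) := by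
  intro Xμν Yμν 𝕏 𝕐
  have : NeZero N := ⟨Nat.one_le_iff_ne_zero.mp hN⟩
  have hq0 : q ≠ 0 := fun h => hq.ne_zero (NeZero.ne N) (by simp [h])
  obtain ⟨a, ha⟩ := hq.exists_eq_mul_pow_val (mul_ne_zero hu hu') (by rw [hx, mul_pow])
  let ρ : Fin N → ℂ := fun r => (q ^ 2) ^ (r : ℕ)
  have hρ : ∀ r, ρ r ^ N = 1 := fun r => by
    rw [← pow_mul, mul_comm, pow_mul, hq.pow_eq_one, one_pow]
  let t : Fin N → ℂ := fun r => v'' * ρ r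
  let c : Fin N → CN N := fun r => diagShiftEigenvector N (q ^ 2)⁻¹ (u⁻¹ * v') v (t r)
  have hc : ∀ r, opDiagShift (q ^ 2)⁻¹ (u⁻¹ * v') v (c r) = t r • c r := fun r =>
    opDiagShift_eigenvector hq.inv (by rw [mul_pow, hρ, mul_one, hy, mul_pow, inv_pow])
  have ht : Function.Injective t := fun r s hrs =>
    Fin.ext (hq.pow_inj r.isLt s.isLt (mul_left_cancel₀ hv'' hrs))
  have hind : LinearIndependent ℂ c := Module.End.eigenvectors_linearIndependent' _ t ht c
    fun r => ⟨Module.End.mem_eigenspace_iff.mpr (hc r), diagShiftEigenvector_ne_zero hv _⟩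
  let ψ : Fin N → CN N →ₗ[ℂ] CN N ⊗[ℂ] CN N := fun r => cyclicMap (ρ r) a (c r)
  have hψ := lsum_cyclicMap_bijective (ρ := ρ) (fun r => pow_ne_zero _ (pow_ne_zero 2 hq0)) a hind
  have hX : ∀ r f, ψ r (Xμν f) = 𝕏 (ψ r f) := fun r f => cyclicMap_opA hq.pow_eq_one ha _ f
  have hY : ∀ r f, ψ r (Yμν f) = 𝕐 (ψ r f) := fun r f => cyclicMap_opB hq0 hu (hρ r) (hc r) f
  refine ⟨fun r => LinearMap.range (ψ r), DirectSum.isInternal_range_of_bijective_lsum ψ hψ,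
    ?_, fun r => ⟨LinearEquiv.ofInjective _ (Finsupp.injective_of_injective_lsum ψ hψ.1 r),
      fun f => ⟨hX r f, hY r f⟩⟩⟩
  rintro r _ ⟨f, rfl⟩
  exact ⟨⟨Xμν f, hX r f⟩, ⟨Yμν f, hY r f⟩⟩

/-- for a regular pair (μ, ν) of standard Weyl pairs, ℂ^N ⊗ ℂ^N is
an internal direct sum of N invariant subspaces, each equivariantly isomorphic
to ℂ^N with the Weyl pair μν (via X_{μν} ↦ X_μ⊗X_ν, Y_{μν} ↦ X_μ⁻¹⊗Y_ν + Y_μ⊗Id). -/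
theorem stmt7 (N : ℕ) (hN : 1 ≤ N) (q : ℂ) (hq : IsPrimitiveRoot (q ^ 2) N)
    (u v u' v' u'' v'' : ℂ) (hu : u ≠ 0) (hv : v ≠ 0) (hu' : u' ≠ 0) (hv' : v' ≠ 0)
    (hu'' : u'' ≠ 0) (hv'' : v'' ≠ 0)
    (hreg : (u ^ N)⁻¹ * v' ^ N + v ^ N ≠ 0)
    (hx : u'' ^ N = u ^ N * u' ^ N) (hy : v'' ^ N = (u ^ N)⁻¹ * v' ^ N + v ^ N) :
    let Xμν : Module.End ℂ (CN N) := u'' • opA q N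
    let Yμν : Module.End ℂ (CN N) := v'' • opB N
    let 𝕏 : Module.End ℂ (CN N ⊗[ℂ] CN N) := TensorProduct.map (u • opA q N) (u' • opA q N)
    let 𝕐 : Module.End ℂ (CN N ⊗[ℂ] CN N) :=
      TensorProduct.map (Ring.inverse (u • opA q N)) (v' • opB N) +
        TensorProduct.map (v • opB N) 1
    ∃ W : Fin N → Submodule ℂ (CN N ⊗[ℂ] CN N),
      DirectSum.IsInternal W ∧
      (∀ i, ∀ t ∈ W i, 𝕏 t ∈ W i ∧ 𝕐 t ∈ W i) ∧
      (∀ i, ∃ ψ : CN N ≃ₗ[ℂ] W i, ∀ w : CN N,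
        ((ψ (Xμν w) : CN N ⊗[ℂ] CN N)) = 𝕏 (ψ w) ∧
        ((ψ (Yμν w) : CN N ⊗[ℂ] CN N)) = 𝕐 (ψ w)) :=
  stmt7_general N hN q hq u v u' v' u'' v'' hu hv hu' hv'' hx hy

end
end
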